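/- arXiv:1405.5020 — 2 statements merged into one kernel-verified Lean document; each statement's English description precedes it below -/
import Mathlib

section
/- The statistics M_n and F_n coincide: for any vectors X₁,...,X_n and μ₀ in ℝᵈ, (X̄_n − μ₀)ᵀ(X̄_n − μ₀) − n⁻¹·tr( (n−1)⁻¹ Σᵢ (Xᵢ − X̄_n)(Xᵢ − X̄_n)ᵀ ) = (n(n−1))⁻¹ Σ_{i≠j} (Xᵢ − μ₀)ᵀ(Xⱼ − μ₀). -/
/-!
Put `Y i = X i - μ₀`. Centering commutes with translation, so both statistics are functions
of `S = (∑ Y i) ⬝ (∑ Y i)` and `Q = ∑ Y i ⬝ Y i`: the squared mean deviation is `S / n²`, the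
trace of the sample covariance is `(Q - S / n) / (n - 1)`, and the off-diagonal sum is `S - Q`.
Both sides therefore equal `(S - Q) / (n (n - 1))`.
-/

open Finset Matrix

variable {ι m K : Type*}

theorem sum_sum_ne_dotProduct [Fintype ι] [Fintype m] [CommRing K] [DecidableEq ι]
    (v : ι → m → K) :
    ∑ i, ∑ j ∈ univ.filter (fun j => j ≠ i), v i ⬝ᵥ v j
      = (∑ i, v i) ⬝ᵥ (∑ i, v i) - ∑ i, v i ⬝ᵥ v i := by
  simp only [filter_ne', sum_erase_eq_sub (mem_univ _), sum_sub_distrib, sum_dotProduct,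
    dotProduct_sum]
  rw [sum_comm]

section Field

variable [Field K]

variable {s : Finset ι}

theorem sum_centered_dotProduct_self [Fintype m] (v : ι → m → K) :
    ∑ i ∈ s, (v i - (#s : K)⁻¹ • ∑ k ∈ s, v k) ⬝ᵥ (v i - (#s : K)⁻¹ • ∑ k ∈ s, v k)
      = ∑ i ∈ s, v i ⬝ᵥ v i - (#s : K)⁻¹ * (∑ i ∈ s, v i) ⬝ᵥ (∑ i ∈ s, v i) := by
  have hc := mul_inv_mul_cancel (#s : K)⁻¹
  rw [inv_inv] at hc
  simp only [sub_dotProduct, dotProduct_sub, smul_dotProduct, dotProduct_smul, smul_eq_mul,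
    sum_sub_distrib, ← mul_sum, ← sum_dotProduct, ← dotProduct_sum, sum_const,
    ← Nat.cast_smul_eq_nsmul K #s (∑ k ∈ s, v k)]
  linear_combination (∑ i ∈ s, v i) ⬝ᵥ (∑ i ∈ s, v i) * hc

theorem smul_sum_sub_eq_smul_sum_sub (v : ι → m → K) (μ : m → K) (hs : (#s : K) ≠ 0) :
    (#s : K)⁻¹ • ∑ i ∈ s, v i - μ = (#s : K)⁻¹ • ∑ i ∈ s, (v i - μ) := by
  rw [sum_sub_distrib, sum_const, smul_sub, ← Nat.cast_smul_eq_nsmul K, smul_smul,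
    inv_mul_cancel₀ hs, one_smul]

theorem sub_smul_sum_eq_sub_smul_sum_sub (v : ι → m → K) (μ : m → K) (hs : (#s : K) ≠ 0)
    (i : ι) :
    v i - (#s : K)⁻¹ • ∑ k ∈ s, v k = (v i - μ) - (#s : K)⁻¹ • ∑ k ∈ s, (v k - μ) := by
  rw [← smul_sum_sub_eq_smul_sum_sub v μ hs]
  abel

end Field

theorem Mn_eq_Fn (n d : ℕ) (hn : 2 ≤ n) (X : Fin n → Fin d → ℝ) (μ₀ : Fin d → ℝ) :
    dotProduct ((n : ℝ)⁻¹ • ∑ i, X i - μ₀) ((n : ℝ)⁻¹ • ∑ i, X i - μ₀)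
      - (n : ℝ)⁻¹ * Matrix.trace (((n : ℝ) - 1)⁻¹ •
          ∑ i, Matrix.vecMulVec (X i - (n : ℝ)⁻¹ • ∑ k, X k) (X i - (n : ℝ)⁻¹ • ∑ k, X k))
    = ((n : ℝ) * ((n : ℝ) - 1))⁻¹ *
        ∑ i, ∑ j ∈ univ.filter (fun j => j ≠ i),
          dotProduct (X i - μ₀) (X j - μ₀) := by
  have hn₂ : (2 : ℝ) ≤ n := by exact_mod_cast hn
  have hn₀ : (n : ℝ) ≠ 0 := by positivity
  have hn₁ : (n : ℝ) - 1 ≠ 0 := by linarith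
  have hcard : (#(univ : Finset (Fin n)) : ℝ) = n := by simp
  have hmean := smul_sum_sub_eq_smul_sum_sub X μ₀ (hcard ▸ hn₀)
  have hdev := sub_smul_sum_eq_sub_smul_sum_sub X μ₀ (hcard ▸ hn₀)
  have hcentered := sum_centered_dotProduct_self (s := univ) (fun i => X i - μ₀)
  rw [hcard] at hmean hdev hcentered
  simp only [hmean, hdev, trace_smul, trace_sum, trace_vecMulVec, hcentered,
    sum_sum_ne_dotProduct, smul_dotProduct, dotProduct_smul, smul_eq_mul]
  field_simp
  ring
end

section
/- Under model B with Z₁, Z₂ i.i.d. copies of Z as above, independent of each other, and Σ' = ΓᵀΓ = (σ'_{j,l}), the random variable u = Σⱼ Σₗ σ'_{j,l} Z_{1,j} Z_{2,l} satisfies E[u⁴] ≤ C·( tr(Σ'⁴) + (tr(Σ'²))² ) for a constant C depending only on Δ. -/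
/-!
Write `S = ΓᵀΓ`. Expanding `u ^ 4` and using the independence of `Z₁` and `Z₂`,
`E[u⁴] = ∑_{a,b} (∏ᵢ S_{aᵢ bᵢ}) m(a) m(b)` over index quadruples `a`, `b`, where
`m(a) = E[Z_{a₀} Z_{a₁} Z_{a₂} Z_{a₃}]`. The moment assumptions force `m` to be the Wick tensor
`δ₀₁δ₂₃ + δ₀₂δ₁₃ + δ₀₃δ₁₂ + Δ δ₀₁δ₀₂δ₀₃`, and contracting with it twice gives, for `G = S Sᵀ`,
`E[u⁴] = 3 (tr G)² + 6 tr G² + 3Δ (∑ₓ G_xx² + ∑_z (SᵀS)_zz²) + Δ² ∑ S_xz⁴`.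
Each `Δ`-term is at most `(tr G)²` because `G` and `SᵀS` are positive semidefinite, and `G = S²`
since `S` is symmetric.
-/

open MeasureTheory ProbabilityTheory Matrix Finset
open scoped ENNReal

section Wick

variable {ι κ : Type*}

theorem Fintype.sum_fin_four_pi [Fintype ι] {M : Type*} [AddCommMonoid M]
    (g : (Fin 4 → ι) → M) :
    ∑ a, g a = ∑ a₀, ∑ a₁, ∑ a₂, ∑ a₃, g ![a₀, a₁, a₂, a₃] := by
  simp only [← (Fin.consEquiv fun _ => ι).sum_comp, Fintype.sum_prod_type]
  simp [Fin.consEquiv, Subsingleton.elim (default : Fin 0 → ι) ![]]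

def wickFourthMoment [DecidableEq ι] (Δ : ℝ) (a : Fin 4 → ι) : ℝ :=
  let δ : Matrix ι ι ℝ := 1
  δ (a 0) (a 1) * δ (a 2) (a 3) + δ (a 0) (a 2) * δ (a 1) (a 3) + δ (a 0) (a 3) * δ (a 1) (a 2)
    + Δ * (δ (a 0) (a 1) * δ (a 0) (a 2) * δ (a 0) (a 3))

theorem wickFourthMoment_vec [DecidableEq ι] (Δ : ℝ) (x y z w : ι) :
    wickFourthMoment Δ ![x, y, z, w] =
      (1 : Matrix ι ι ℝ) x y * (1 : Matrix ι ι ℝ) z w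
        + (1 : Matrix ι ι ℝ) x z * (1 : Matrix ι ι ℝ) y w
        + (1 : Matrix ι ι ℝ) x w * (1 : Matrix ι ι ℝ) y z
        + Δ * ((1 : Matrix ι ι ℝ) x y * (1 : Matrix ι ι ℝ) x z * (1 : Matrix ι ι ℝ) x w) :=
  rfl

theorem sum_wickFourthMoment_mul [Fintype ι] [DecidableEq ι] (Δ : ℝ) (f : (Fin 4 → ι) → ℝ) :
    ∑ a, wickFourthMoment Δ a * f a
      = ∑ x, ∑ y, (f ![x, x, y, y] + f ![x, y, x, y] + f ![x, y, y, x])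
        + Δ * ∑ x, f ![x, x, x, x] := by
  rw [Fintype.sum_fin_four_pi]
  simp only [wickFourthMoment_vec, one_apply, add_mul, sum_add_distrib, mul_sum, ite_mul, mul_ite,
    one_mul, zero_mul, mul_one, mul_zero, sum_ite_eq, mem_univ, if_true, sum_const_zero,
    sum_ite_irrel]

theorem sum_wickFourthMoment_mul_prod [Fintype κ] [DecidableEq κ] (Δ : ℝ) (S : Matrix ι κ ℝ)
    (a : Fin 4 → ι) :
    ∑ b, wickFourthMoment Δ b * ∏ i, S (a i) (b i)
      = (S * Sᵀ) (a 0) (a 1) * (S * Sᵀ) (a 2) (a 3) + (S * Sᵀ) (a 0) (a 2) * (S * Sᵀ) (a 1) (a 3)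
        + (S * Sᵀ) (a 0) (a 3) * (S * Sᵀ) (a 1) (a 2) + Δ * ∑ z, ∏ i, S (a i) z := by
  simp only [sum_wickFourthMoment_mul, Fin.prod_univ_four, mul_apply, transpose_apply, sum_mul_sum,
    ← sum_add_distrib, Fin.isValue, cons_val_zero, cons_val_one, Matrix.cons_val]
  congr 1
  exact sum_congr rfl fun x _ => sum_congr rfl fun y _ => by ring

def bilinearFourthMoment [Fintype ι] [Fintype κ] (Δ : ℝ) (S : Matrix ι κ ℝ) : ℝ :=
  3 * trace (S * Sᵀ) ^ 2 + 6 * trace ((S * Sᵀ) * (S * Sᵀ))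
    + 3 * Δ * (∑ x, (S * Sᵀ) x x ^ 2 + ∑ z, (Sᵀ * S) z z ^ 2) + Δ ^ 2 * ∑ x, ∑ z, S x z ^ 4

theorem sum_sum_prod_mul_wickFourthMoment_mul [Fintype ι] [DecidableEq ι] [Fintype κ]
    [DecidableEq κ] (Δ : ℝ) (S : Matrix ι κ ℝ) :
    ∑ a, ∑ b, (∏ i, S (a i) (b i)) * wickFourthMoment Δ a * wickFourthMoment Δ b
      = bilinearFourthMoment Δ S := by
  have hG : ∀ x y, (S * Sᵀ) y x = (S * Sᵀ) x y := fun x y => by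
    rw [← transpose_apply (S * Sᵀ), transpose_mul, transpose_transpose]
  have hinner : ∀ a : Fin 4 → ι,
      ∑ b, (∏ i, S (a i) (b i)) * wickFourthMoment Δ a * wickFourthMoment Δ b
        = wickFourthMoment Δ a * ∑ b, wickFourthMoment Δ b * ∏ i, S (a i) (b i) := fun a => by
    rw [mul_sum]
    exact sum_congr rfl fun b _ => by ring
  have htrace_sq : trace (S * Sᵀ) ^ 2 = ∑ x, ∑ y, (S * Sᵀ) x x * (S * Sᵀ) y y := by
    rw [trace, sq, sum_mul_sum]
    rfl
  have htrace_mul : trace ((S * Sᵀ) * (S * Sᵀ)) = ∑ x, ∑ y, (S * Sᵀ) x y ^ 2 := by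
    rw [trace]
    refine sum_congr rfl fun x _ => ?_
    rw [diag_apply, mul_apply]
    exact sum_congr rfl fun y _ => by rw [hG x y, sq]
  have hcols : ∑ z, (Sᵀ * S) z z ^ 2 = ∑ x, ∑ y, ∑ z, S x z * S x z * S y z * S y z := by
    simp only [mul_apply, transpose_apply, sq, sum_mul_sum]
    rw [sum_comm]
    refine sum_congr rfl fun x _ => ?_
    rw [sum_comm]
    exact sum_congr rfl fun y _ => sum_congr rfl fun z _ => by ring
  simp only [hinner, sum_wickFourthMoment_mul_prod]
  rw [sum_wickFourthMoment_mul, bilinearFourthMoment, htrace_sq, htrace_mul, hcols]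
  simp only [Fin.isValue, cons_val_zero, cons_val_one, Matrix.cons_val, Fin.prod_univ_four, hG,
    mul_add, sum_add_distrib, mul_sum]
  ring_nf
  simp only [sum_mul]
  ring

theorem Matrix.PosSemidef.sum_diag_sq_le_trace_sq [Fintype ι] {A : Matrix ι ι ℝ}
    (hA : A.PosSemidef) : ∑ i, A i i ^ 2 ≤ A.trace ^ 2 :=
  sum_sq_le_sq_sum_of_nonneg fun _ _ => hA.diag_nonneg

theorem Matrix.posSemidef_mul_transpose_self [Fintype ι] [Fintype κ] (S : Matrix ι κ ℝ) :
    (S * Sᵀ).PosSemidef := by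
  simpa [conjTranspose_eq_transpose_of_trivial] using posSemidef_self_mul_conjTranspose S

theorem bilinearFourthMoment_le [Fintype ι] [DecidableEq ι] [Fintype κ] (Δ : ℝ)
    (S : Matrix ι κ ℝ) :
    bilinearFourthMoment Δ S
      ≤ (9 + 6 * |Δ| + Δ ^ 2) * (trace ((S * Sᵀ) * (S * Sᵀ)) + trace (S * Sᵀ) ^ 2) := by
  have hG := posSemidef_mul_transpose_self S
  have hrows := hG.sum_diag_sq_le_trace_sq
  have hcols : ∑ z, (Sᵀ * S) z z ^ 2 ≤ trace (S * Sᵀ) ^ 2 := by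
    simpa [trace_mul_comm Sᵀ S] using (posSemidef_mul_transpose_self Sᵀ).sum_diag_sq_le_trace_sq
  have hentries : ∑ x, ∑ z, S x z ^ 4 ≤ ∑ x, (S * Sᵀ) x x ^ 2 := sum_le_sum fun x _ => by
    have hGxx : (S * Sᵀ) x x = ∑ z, S x z ^ 2 := by simp [mul_apply, sq]
    simpa [hGxx, ← pow_mul] using
      sum_sq_le_sq_sum_of_nonneg (s := univ) fun z _ => sq_nonneg (S x z)
  have htrace : 0 ≤ trace ((S * Sᵀ) * (S * Sᵀ)) := by
    simpa [sq] using (hG.pow 2).trace_nonneg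
  have hdiag : 0 ≤ ∑ x, (S * Sᵀ) x x ^ 2 + ∑ z, (Sᵀ * S) z z ^ 2 := by positivity
  have hΔ : Δ * (∑ x, (S * Sᵀ) x x ^ 2 + ∑ z, (Sᵀ * S) z z ^ 2)
      ≤ |Δ| * (2 * trace (S * Sᵀ) ^ 2) :=
    (mul_le_mul_of_nonneg_right (le_abs_self Δ) hdiag).trans
      (mul_le_mul_of_nonneg_left (by linarith) (abs_nonneg Δ))
  rw [bilinearFourthMoment]
  nlinarith [mul_le_mul_of_nonneg_left (hentries.trans hrows) (sq_nonneg Δ), abs_nonneg Δ,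
    sq_nonneg (trace (S * Sᵀ)), mul_nonneg (abs_nonneg Δ) htrace,
    mul_nonneg (sq_nonneg Δ) htrace]

end Wick

section Moments

variable {Ω ι κ : Type*} [MeasurableSpace Ω] {μ : Measure Ω}

theorem prod_integral_pow_eq_zero_of_eq_one [Fintype ι] {Z : ι → Ω → ℝ}
    (h1 : ∀ j, ∫ ω, Z j ω ∂μ = 0) {ν : ι → ℕ} {j : ι} (hj : ν j = 1) :
    ∏ l, ∫ ω, Z l ω ^ ν l ∂μ = 0 :=
  prod_eq_zero (mem_univ j) (by simpa [hj] using h1 j)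

theorem prod_integral_pow_eq_one_of_forall_eq_zero_or_two [Fintype ι] [IsProbabilityMeasure μ]
    {Z : ι → Ω → ℝ} (h2 : ∀ j, ∫ ω, Z j ω ^ 2 ∂μ = 1) {ν : ι → ℕ}
    (hν : ∀ j, ν j = 0 ∨ ν j = 2) : ∏ l, ∫ ω, Z l ω ^ ν l ∂μ = 1 :=
  prod_eq_one fun j _ => by rcases hν j with h | h <;> simp [h, h2]

theorem prod_integral_pow_eq_wickFourthMoment [Fintype ι] [DecidableEq ι]
    [IsProbabilityMeasure μ] {Δ : ℝ} {Z : ι → Ω → ℝ} (h1 : ∀ j, ∫ ω, Z j ω ∂μ = 0)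
    (h2 : ∀ j, ∫ ω, Z j ω ^ 2 ∂μ = 1) (h4 : ∀ j, ∫ ω, Z j ω ^ 4 ∂μ = 3 + Δ) {x y z w : ι}
    {ν : ι → ℕ} (hν : ∀ j, ν j = (if x = j then 1 else 0) + (if y = j then 1 else 0)
      + (if z = j then 1 else 0) + (if w = j then 1 else 0)) :
    ∏ j, ∫ ω, Z j ω ^ ν j ∂μ = wickFourthMoment Δ ![x, y, z, w] := by
  simp only [wickFourthMoment_vec, one_apply]
  by_cases hxy : x = y
  · subst hxy
    by_cases hxz : x = z
    · subst hxz
      by_cases hxw : x = w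
      · subst hxw
        rw [prod_eq_single x (fun j _ hj => by simp [hν, Ne.symm hj]) (by simp)]
        simp [hν, h4]
        ring
      · rw [prod_integral_pow_eq_zero_of_eq_one h1 (j := w) (by simp [hν, hxw])]
        simp [hxw]
    · by_cases hzw : z = w
      · subst hzw
        rw [prod_integral_pow_eq_one_of_forall_eq_zero_or_two h2 fun j => by
          by_cases hx : x = j <;> by_cases hz : z = j <;> simp_all]
        simp [hxz]
      · rw [prod_integral_pow_eq_zero_of_eq_one h1 (j := z) (by simp [hν, hxz, Ne.symm hzw])]
        simp [hxz, hzw]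
  · by_cases hxz : x = z
    · subst hxz
      by_cases hyw : y = w
      · subst hyw
        rw [prod_integral_pow_eq_one_of_forall_eq_zero_or_two h2 fun j => by
          by_cases hx : x = j <;> by_cases hy : y = j <;> simp_all]
        simp [hxy]
      · rw [prod_integral_pow_eq_zero_of_eq_one h1 (j := y) (by simp [hν, hxy, Ne.symm hyw])]
        simp [hxy, Ne.symm hxy, hyw]
    · by_cases hxw : x = w
      · subst hxw
        by_cases hyz : y = z
        · subst hyz
          rw [prod_integral_pow_eq_one_of_forall_eq_zero_or_two h2 fun j => by
            by_cases hx : x = j <;> by_cases hy : y = j <;> simp_all]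
          simp [hxy]
        · rw [prod_integral_pow_eq_zero_of_eq_one h1 (j := y) (by simp [hν, hxy, Ne.symm hyz])]
          simp [hxy, Ne.symm hxy, hyz]
      · rw [prod_integral_pow_eq_zero_of_eq_one h1 (j := x)
          (by simp [hν, Ne.symm hxy, Ne.symm hxz, Ne.symm hxw])]
        simp [hxy, hxz, hxw]

theorem integral_prod_eq_wickFourthMoment [Fintype ι] [DecidableEq ι] [IsProbabilityMeasure μ]
    {Δ : ℝ} {Z : ι → Ω → ℝ} (h1 : ∀ j, ∫ ω, Z j ω ∂μ = 0) (h2 : ∀ j, ∫ ω, Z j ω ^ 2 ∂μ = 1)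
    (h4 : ∀ j, ∫ ω, Z j ω ^ 4 ∂μ = 3 + Δ)
    (hfact : ∀ ν : ι → ℕ, ∑ j, ν j = 4 →
      ∫ ω, ∏ j, Z j ω ^ ν j ∂μ = ∏ j, ∫ ω, Z j ω ^ ν j ∂μ) (a : Fin 4 → ι) :
    ∫ ω, ∏ i, Z (a i) ω ∂μ = wickFourthMoment Δ a := by
  obtain ⟨x, y, z, w, rfl⟩ : ∃ x y z w, a = ![x, y, z, w] :=
    ⟨a 0, a 1, a 2, a 3, by ext i; fin_cases i <;> rfl⟩
  set ν : ι → ℕ := fun j => (if x = j then 1 else 0) + (if y = j then 1 else 0)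
      + (if z = j then 1 else 0) + (if w = j then 1 else 0) with hν
  have hsum : ∑ j, ν j = 4 := by simp [hν, sum_add_distrib]
  have hprod : ∀ ω, ∏ i, Z (![x, y, z, w] i) ω = ∏ j, Z j ω ^ ν j := fun ω => by
    simp only [hν, pow_add, prod_mul_distrib, pow_ite, pow_one, pow_zero, prod_ite_eq,
      mem_univ, if_true, Fin.prod_univ_four, Fin.isValue, cons_val_zero, cons_val_one,
      Matrix.cons_val]
  rw [integral_congr_ae (ae_of_all _ hprod), hfact ν hsum]
  exact prod_integral_pow_eq_wickFourthMoment h1 h2 h4 fun _ => rfl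

theorem integrable_prod_of_memLp [IsFiniteMeasure μ] {n : ℕ} {Y : κ → Ω → ℝ}
    (hY : ∀ j, MemLp (Y j) n μ) (b : Fin n → κ) :
    Integrable (fun ω => ∏ i, Y (b i) ω) μ := by
  refine (MemLp.prod' (s := univ) (p := fun _ => (n : ℝ≥0∞)) fun i _ => hY (b i)).integrable ?_
  rw [sum_const, card_univ, Fintype.card_fin, nsmul_eq_mul, ENNReal.one_le_inv]
  exact ENNReal.mul_inv_le_one _

theorem integral_prod_sum_mul [IsFiniteMeasure μ] [Fintype κ] {n : ℕ} {Y : κ → Ω → ℝ}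
    (hY : ∀ j, MemLp (Y j) n μ) (c : Fin n → κ → ℝ) :
    ∫ ω, ∏ i, ∑ j, c i j * Y j ω ∂μ
      = ∑ b : Fin n → κ, (∏ i, c i (b i)) * ∫ ω, ∏ i, Y (b i) ω ∂μ := by
  simp_rw [Fintype.prod_sum, prod_mul_distrib]
  rw [integral_finsetSum _ fun b _ => (integrable_prod_of_memLp hY b).const_mul _]
  simp_rw [integral_const_mul]

theorem integral_bilinear_pow [IsFiniteMeasure μ] [Fintype ι] [Fintype κ] {n : ℕ}
    {X : ι → Ω → ℝ} {Y : κ → Ω → ℝ}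
    (hXY : IndepFun (fun ω j => X j ω) (fun ω l => Y l ω) μ)
    (hX : ∀ j, MemLp (X j) n μ) (hY : ∀ l, MemLp (Y l) n μ) (S : Matrix ι κ ℝ) :
    ∫ ω, (∑ j, ∑ l, S j l * X j ω * Y l ω) ^ n ∂μ
      = ∑ a : Fin n → ι, ∑ b : Fin n → κ,
          (∏ i, S (a i) (b i)) * (∫ ω, ∏ i, X (a i) ω ∂μ) * ∫ ω, ∏ i, Y (b i) ω ∂μ := by
  set W : ι → Ω → ℝ := fun j ω => ∑ l, S j l * Y l ω with hW_def
  have hW : ∀ j, MemLp (W j) n μ := fun j => memLp_finsetSum _ fun l _ => (hY l).const_mul _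
  have hexpand : ∀ ω, (∑ j, ∑ l, S j l * X j ω * Y l ω) ^ n
      = ∑ a : Fin n → ι, (∏ i, X (a i) ω) * ∏ i, W (a i) ω := fun ω => by
    have hfactor : ∑ j, ∑ l, S j l * X j ω * Y l ω = ∑ j, X j ω * W j ω := by
      simp only [hW_def, mul_sum]
      exact sum_congr rfl fun j _ => sum_congr rfl fun l _ => by ring
    rw [hfactor, ← Fin.prod_const, Fintype.prod_sum]
    simp_rw [prod_mul_distrib]
  have hindep : ∀ a : Fin n → ι,
      IndepFun (fun ω => ∏ i, X (a i) ω) (fun ω => ∏ i, W (a i) ω) μ := fun a =>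
    hXY.comp (by fun_prop : Measurable fun v : ι → ℝ => ∏ i, v (a i))
      (by fun_prop : Measurable fun v : κ → ℝ => ∏ i, ∑ l, S (a i) l * v l)
  have hint : ∀ a : Fin n → ι,
      Integrable (fun ω => (∏ i, X (a i) ω) * ∏ i, W (a i) ω) μ := fun a =>
    (hindep a).integrable_mul (integrable_prod_of_memLp hX a) (integrable_prod_of_memLp hW a)
  simp_rw [hexpand]
  rw [integral_finsetSum _ fun a _ => hint a]
  refine sum_congr rfl fun a _ => ?_
  rw [(hindep a).integral_fun_mul_eq_mul_integral
    (integrable_prod_of_memLp hX a).aestronglyMeasurable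
    (integrable_prod_of_memLp hW a).aestronglyMeasurable, hW_def,
    integral_prod_sum_mul hY fun i l => S (a i) l, mul_sum]
  exact sum_congr rfl fun b _ => by ring

theorem integral_bilinear_pow_four [IsFiniteMeasure μ] [Fintype ι] [DecidableEq ι] [Fintype κ]
    [DecidableEq κ] {Δ : ℝ} {X : ι → Ω → ℝ} {Y : κ → Ω → ℝ}
    (hXY : IndepFun (fun ω j => X j ω) (fun ω l => Y l ω) μ)
    (hX : ∀ j, MemLp (X j) 4 μ) (hY : ∀ l, MemLp (Y l) 4 μ)
    (hXm : ∀ a : Fin 4 → ι, ∫ ω, ∏ i, X (a i) ω ∂μ = wickFourthMoment Δ a)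
    (hYm : ∀ b : Fin 4 → κ, ∫ ω, ∏ i, Y (b i) ω ∂μ = wickFourthMoment Δ b) (S : Matrix ι κ ℝ) :
    ∫ ω, (∑ j, ∑ l, S j l * X j ω * Y l ω) ^ 4 ∂μ = bilinearFourthMoment Δ S := by
  rw [integral_bilinear_pow (n := 4) hXY (by exact_mod_cast hX) (by exact_mod_cast hY) S,
    ← sum_sum_prod_mul_wickFourthMoment_mul]
  simp only [hXm, hYm]

end Moments

theorem fourth_moment_u_model_B (Δ : ℝ) :
    ∃ C : ℝ, ∀ (d k : ℕ) (Ω : Type) (_ : MeasureSpace Ω),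
      IsProbabilityMeasure (ℙ : Measure Ω) →
      ∀ (Z₁ Z₂ : Fin k → Ω → ℝ) (Γ : Matrix (Fin d) (Fin k) ℝ),
        IndepFun (fun ω j => Z₁ j ω) (fun ω j => Z₂ j ω) ℙ →
        (∀ j, MemLp (Z₁ j) 4 ℙ) → (∀ j, MemLp (Z₂ j) 4 ℙ) →
        (∀ j, ∫ ω, Z₁ j ω ∂ℙ = 0) → (∀ j, ∫ ω, Z₂ j ω ∂ℙ = 0) →
        (∀ j, ∫ ω, (Z₁ j ω) ^ 2 ∂ℙ = 1) → (∀ j, ∫ ω, (Z₂ j ω) ^ 2 ∂ℙ = 1) →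
        (∀ j, ∫ ω, (Z₁ j ω) ^ 4 ∂ℙ = 3 + Δ) → (∀ j, ∫ ω, (Z₂ j ω) ^ 4 ∂ℙ = 3 + Δ) →
        (∀ ν : Fin k → ℕ, (∑ j, ν j = 4) →
          ∫ ω, ∏ j, (Z₁ j ω) ^ (ν j) ∂ℙ = ∏ j, ∫ ω, (Z₁ j ω) ^ (ν j) ∂ℙ) →
        (∀ ν : Fin k → ℕ, (∑ j, ν j = 4) →
          ∫ ω, ∏ j, (Z₂ j ω) ^ (ν j) ∂ℙ = ∏ j, ∫ ω, (Z₂ j ω) ^ (ν j) ∂ℙ) →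
        (∫ ω, (∑ j, ∑ l, (Γᵀ * Γ) j l * Z₁ j ω * Z₂ l ω) ^ 4 ∂ℙ)
          ≤ C * (Matrix.trace ((Γᵀ * Γ) ^ 4) + (Matrix.trace ((Γᵀ * Γ) ^ 2)) ^ 2) := by
  refine ⟨9 + 6 * |Δ| + Δ ^ 2, ?_⟩
  intro d k Ω _ _ Z₁ Z₂ Γ hindep hL₁ hL₂ hmean₁ hmean₂ hvar₁ hvar₂ hkurt₁ hkurt₂ hfact₁ hfact₂
  have hsq : (Γᵀ * Γ) * (Γᵀ * Γ)ᵀ = (Γᵀ * Γ) ^ 2 := by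
    rw [transpose_mul, transpose_transpose, sq]
  rw [integral_bilinear_pow_four hindep hL₁ hL₂
      (integral_prod_eq_wickFourthMoment hmean₁ hvar₁ hkurt₁ hfact₁)
      (integral_prod_eq_wickFourthMoment hmean₂ hvar₂ hkurt₂ hfact₂),
    show (Γᵀ * Γ) ^ 4 = (Γᵀ * Γ) ^ 2 * (Γᵀ * Γ) ^ 2 by rw [← pow_add], ← hsq]
  exact bilinearFourthMoment_le Δ (Γᵀ * Γ)
end
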